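/- arXiv:2007.14422 — 3 statements merged into one kernel-verified Lean document; each statement's English description precedes it below -/
import Mathlib

section
/- Every syzygous triple in E is disjoint from exactly two Göpel quadruples; every azygous quadruple in E is disjoint from exactly three Göpel quadruples; and any two Göpel quadruples in E have a common element (no two Göpel quadruples are disjoint). -/
open Matrix BigOperators

abbrev F2 : Type := ZMod 2
abbrev V4 : Type := Fin 4 → F2
abbrev M4 : Type := Matrix (Fin 4) (Fin 4) F2

/-- The standard symplectic matrix `J = [[0, I₂], [−I₂, 0]]` over `𝔽₂`. -/
def J4 : M4 := !![0, 0, 1, 0; 0, 0, 0, 1; -1, 0, 0, 0; 0, -1, 0, 0]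

/-- `M ∈ Sp₄(𝔽₂)`, i.e. `ᵀM·J·M = J`. -/
def IsSp4 (M : M4) : Prop := Mᵀ * J4 * M = J4

/-- The quadratic form `q₂(m) = m₁m₃ + m₂m₄`. -/
def q2 (m : V4) : F2 := m 0 * m 2 + m 1 * m 3

/-- The dot action `m ⊙ M := m·M − ((ᵀC·A)₀, (ᵀD·B)₀)` for `M = [[A,B],[C,D]]`:
the correction vector has `j`-th entry `M 2 j * M 0 j + M 3 j * M 1 j`, which is the
`j`-th diagonal entry of `ᵀC·A` for `j = 0,1` and of `ᵀD·B` for `j = 2,3`. -/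
def dotAct (m : V4) (M : M4) : V4 :=
  fun j => Matrix.vecMul m M j - (M 2 j * M 0 j + M 3 j * M 1 j)

/-- The set `E` of even theta characteristics: the isotropic vectors of `q₂`. -/
def Echar : Finset V4 := Finset.univ.filter (fun m => q2 m = 0)

/-- `e(x,y,z) := q₂(x)+q₂(y)+q₂(z)+q₂(x+y+z)`. -/
def eSyz (x y z : V4) : F2 := q2 x + q2 y + q2 z + q2 (x + y + z)

/-- A syzygous triple: three pairwise distinct elements of `E` with `e(x,y,z) = 0`. -/
def IsSyzTriple (T : Finset V4) : Prop :=
  T ⊆ Echar ∧ T.card = 3 ∧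
    ∀ x ∈ T, ∀ y ∈ T, ∀ z ∈ T, x ≠ y → x ≠ z → y ≠ z → eSyz x y z = 0

/-- An azygous triple: three pairwise distinct elements of `E` with `e(x,y,z) ≠ 0`. -/
def IsAzyTriple (T : Finset V4) : Prop :=
  T ⊆ Echar ∧ T.card = 3 ∧
    ∀ x ∈ T, ∀ y ∈ T, ∀ z ∈ T, x ≠ y → x ≠ z → y ≠ z → eSyz x y z ≠ 0

/-- A Göpel quadruple: four distinct elements of `E`, all of whose triples are syzygous. -/
def IsGopel (Q : Finset V4) : Prop :=
  Q ⊆ Echar ∧ Q.card = 4 ∧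
    ∀ x ∈ Q, ∀ y ∈ Q, ∀ z ∈ Q, x ≠ y → x ≠ z → y ≠ z → eSyz x y z = 0

/-- An azygous quadruple: four distinct elements of `E`, all of whose triples are azygous. -/
def IsAzyQuad (Q : Finset V4) : Prop :=
  Q ⊆ Echar ∧ Q.card = 4 ∧
    ∀ x ∈ Q, ∀ y ∈ Q, ∀ z ∈ Q, x ≠ y → x ≠ z → y ≠ z → eSyz x y z ≠ 0

def v0000 : V4 := ![0,0,0,0]
def v0001 : V4 := ![0,0,0,1]
def v0010 : V4 := ![0,0,1,0]
def v0011 : V4 := ![0,0,1,1]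
def v0100 : V4 := ![0,1,0,0]
def v0110 : V4 := ![0,1,1,0]
def v1000 : V4 := ![1,0,0,0]
def v1001 : V4 := ![1,0,0,1]
def v1100 : V4 := ![1,1,0,0]
def v1111 : V4 := ![1,1,1,1]

/-- A `k`-point of the Satake compactification `A₂(2)ˢ ⊆ ℙ⁹`: a tuple `(x_m)_{m ∈ E}`
satisfying the five linear equations and the quartic equation. -/
def IsA22Point {k : Type*} [Field k] (x : V4 → k) : Prop :=
  x v1000 - x v1100 + x v1111 - x v1001 = 0 ∧
  x v0000 - x v0001 - x v0110 - x v1100 = 0 ∧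
  x v0110 - x v0010 - x v1111 + x v0011 = 0 ∧
  x v0100 - x v0000 + x v1001 + x v0011 = 0 ∧
  x v0100 - x v1000 + x v0001 - x v0010 = 0 ∧
  (∑ m ∈ Echar, (x m) ^ 2) ^ 2 - 4 * ∑ m ∈ Echar, (x m) ^ 4 = 0

lemma Echar_nonempty : Echar.Nonempty := ⟨v0000, by decide⟩

/-- An absolute value on a field `K`. -/
def IsAbsValue {K : Type*} [Field K] (v : K → ℝ) : Prop :=
  (∀ a, 0 ≤ v a) ∧ (∀ a, v a = 0 ↔ a = 0) ∧
    (∀ a b, v (a * b) = v a * v b) ∧ (∀ a b, v (a + b) ≤ v a + v b)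

/-- A nonarchimedean absolute value on a field `K`. -/
def IsNonarchAbsValue {K : Type*} [Field K] (v : K → ℝ) : Prop :=
  IsAbsValue v ∧ ∀ a b, v (a + b) ≤ max (v a) (v b)

/-- An absolute value induced by a field embedding into `ℂ`. -/
def IsComplexEmbAbsValue {K : Type*} [Field K] (v : K → ℝ) : Prop :=
  ∃ σ : K →+* ℂ, ∀ a, v a = ‖σ a‖

/-!
Let `B` be the polar form of `q₂`. Then `e(x,y,z) = B(x+y, x+z)`, and since a totally isotropic
subspace of the symplectic space `(𝔽₂⁴, B)` is at most a plane, four distinct elements of `E`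
form a Göpel quadruple exactly when they sum to zero. The ten elements of `E` also sum to zero,
so two disjoint Göpel quadruples would leave two elements of `E` with zero sum, i.e. equal ones.
The two counts are then a finite check over the zero-sum `4`-subsets of the complement in `E` of
the given triple or quadruple.
-/

open Finset

section ZeroSumQuadruples

variable {G : Type*} [AddCommMonoid G] [DecidableEq G]

def zeroSumQuadruples (s : Finset G) : Finset (Finset G) :=
  (s.powersetCard 4).filter fun Q => ∑ x ∈ Q, x = 0

theorem mem_zeroSumQuadruples {s Q : Finset G} :
    Q ∈ zeroSumQuadruples s ↔ Q ⊆ s ∧ #Q = 4 ∧ ∑ x ∈ Q, x = 0 := by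
  rw [zeroSumQuadruples, mem_filter, mem_powersetCard, and_assoc]

end ZeroSumQuadruples

section ElementaryAbelianTwoGroup

variable {G : Type*} [AddCommGroup G] [Module (ZMod 2) G]

theorem ZModModule.add_eq_zero_iff_eq {a b : G} : a + b = 0 ↔ a = b := by
  rw [add_eq_zero_iff_eq_neg, ZModModule.neg_eq_self]

variable [DecidableEq G]

theorem add_add_mem_of_sum_eq_zero {Q : Finset G} (hQ : #Q = 4) (hsum : ∑ x ∈ Q, x = 0)
    {x y z : G} (hx : x ∈ Q) (hy : y ∈ Q) (hz : z ∈ Q) (hxy : x ≠ y) (hxz : x ≠ z)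
    (hyz : y ≠ z) : x + y + z ∈ Q := by
  have hy' : y ∈ Q.erase x := mem_erase.2 ⟨hxy.symm, hy⟩
  have hz' : z ∈ (Q.erase x).erase y := mem_erase.2 ⟨hyz.symm, mem_erase.2 ⟨hxz.symm, hz⟩⟩
  obtain ⟨w, hw⟩ : ∃ w, ((Q.erase x).erase y).erase z = {w} := by
    rw [← card_eq_one, card_erase_of_mem hz', card_erase_of_mem hy', card_erase_of_mem hx, hQ]
  have hwQ : w ∈ Q :=
    mem_of_mem_erase <| mem_of_mem_erase <| mem_of_mem_erase <| hw ▸ mem_singleton_self w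
  rw [← add_sum_erase _ _ hx, ← add_sum_erase _ _ hy', ← add_sum_erase _ _ hz', hw,
    sum_singleton, ← add_assoc, ← add_assoc, ZModModule.add_eq_zero_iff_eq] at hsum
  rwa [hsum]

theorem card_sdiff_ne_two_of_sum_eq_zero {s t : Finset G} (hst : s ⊆ t)
    (hs : ∑ x ∈ s, x = 0) (ht : ∑ x ∈ t, x = 0) : #(t \ s) ≠ 2 := by
  intro h
  obtain ⟨a, b, hab, hts⟩ := card_eq_two.1 h
  have hsum : ∑ x ∈ t \ s, x = 0 := by
    rw [← add_left_inj (∑ x ∈ s, x), sum_sdiff hst, hs, ht, add_zero]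
  rw [hts, sum_pair hab, ZModModule.add_eq_zero_iff_eq] at hsum
  exact hab hsum

end ElementaryAbelianTwoGroup

def q2Polar (x y : V4) : F2 := x 0 * y 2 + x 2 * y 0 + x 1 * y 3 + x 3 * y 1

theorem eSyz_eq_q2Polar (x y z : V4) : eSyz x y z = q2Polar (x + y) (x + z) := by
  simp only [eSyz, q2, q2Polar, Pi.add_apply]
  linear_combination
    (y 0 * y 2 + y 1 * y 3 + z 0 * z 2 + z 1 * z 3) * (CharTwo.two_eq_zero : (2 : F2) = 0)

set_option synthInstance.maxSize 3000 in
set_option maxRecDepth 4000 in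
/-- Three distinct nonzero pairwise orthogonal vectors span a totally isotropic subspace of the
nondegenerate symplectic space `𝔽₂⁴`, which is at most a plane. -/
theorem eq_add_of_q2Polar_eq_zero : ∀ u v w : V4, u ≠ 0 → v ≠ 0 → w ≠ 0 → u ≠ v → u ≠ w →
    v ≠ w → q2Polar u v = 0 → q2Polar u w = 0 → q2Polar v w = 0 → w = u + v := by
  decide

theorem mem_Echar {m : V4} : m ∈ Echar ↔ q2 m = 0 := by
  simp [Echar]

theorem eSyz_eq_q2_add_add {x y z : V4} (hx : x ∈ Echar) (hy : y ∈ Echar) (hz : z ∈ Echar) :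
    eSyz x y z = q2 (x + y + z) := by
  rw [mem_Echar] at hx hy hz
  simp [eSyz, hx, hy, hz]

theorem IsGopel.sum_eq_zero {Q : Finset V4} (hQ : IsGopel Q) : ∑ x ∈ Q, x = 0 := by
  obtain ⟨-, hcard, hsyz⟩ := hQ
  obtain ⟨a, b, c, d, hab, hac, had, hbc, hbd, hcd, rfl⟩ := card_eq_four.1 hcard
  have polar_eq_zero {x y z : V4} (hx : x ∈ ({a, b, c, d} : Finset V4))
      (hy : y ∈ ({a, b, c, d} : Finset V4)) (hz : z ∈ ({a, b, c, d} : Finset V4))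
      (hxy : x ≠ y) (hxz : x ≠ z) (hyz : y ≠ z) : q2Polar (x + y) (x + z) = 0 := by
    rw [← eSyz_eq_q2Polar]
    exact hsyz x hx y hy z hz hxy hxz hyz
  have hplane : a + d = (a + b) + (a + c) := by
    refine eq_add_of_q2Polar_eq_zero _ _ _ ?_ ?_ ?_ ((add_right_injective a).ne hbc)
      ((add_right_injective a).ne hbd) ((add_right_injective a).ne hcd)
      (polar_eq_zero ?_ ?_ ?_ hab hac hbc) (polar_eq_zero ?_ ?_ ?_ hab had hbd)
      (polar_eq_zero ?_ ?_ ?_ hac had hcd)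
    all_goals simp [ZModModule.add_eq_zero_iff_eq, *]
  rw [sum_insert (by simp [hab, hac, had]), sum_insert (by simp [hbc, hbd]), sum_pair hcd]
  calc a + (b + (c + d)) = (a + d) + (b + c) := by abel
    _ = 0 := by
      rw [hplane, add_right_comm, ZModModule.add_add_add_cancel, ZModModule.add_self]

theorem isGopel_iff_mem_zeroSumQuadruples {Q : Finset V4} :
    IsGopel Q ↔ Q ∈ zeroSumQuadruples Echar := by
  rw [mem_zeroSumQuadruples]
  refine ⟨fun hQ => ⟨hQ.1, hQ.2.1, hQ.sum_eq_zero⟩, fun ⟨hE, hcard, hsum⟩ => ⟨hE, hcard, ?_⟩⟩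
  intro x hx y hy z hz hxy hxz hyz
  rw [eSyz_eq_q2_add_add (hE hx) (hE hy) (hE hz), ← mem_Echar]
  exact hE (add_add_mem_of_sum_eq_zero hcard hsum hx hy hz hxy hxz hyz)

theorem setOf_isGopel_disjoint (T : Finset V4) :
    {Q | IsGopel Q ∧ Disjoint T Q} = ↑(zeroSumQuadruples (Echar \ T)) := by
  ext Q
  simp only [Set.mem_ofPred_eq, isGopel_iff_mem_zeroSumQuadruples, mem_coe,
    mem_zeroSumQuadruples, subset_sdiff, disjoint_comm]
  tauto

theorem IsGopel.not_disjoint {Q Q' : Finset V4} (hQ : IsGopel Q) (hQ' : IsGopel Q') :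
    ¬ Disjoint Q Q' := by
  intro hdisj
  rw [isGopel_iff_mem_zeroSumQuadruples, mem_zeroSumQuadruples] at hQ hQ'
  have hsub : Q ∪ Q' ⊆ Echar := union_subset hQ.1 hQ'.1
  have hcard : #Echar = 10 := by decide
  have hsum : ∑ m ∈ Echar, m = 0 := by decide
  refine card_sdiff_ne_two_of_sum_eq_zero hsub ?_ hsum ?_
  · rw [sum_union hdisj, hQ.2.2, hQ'.2.2, add_zero]
  · rw [card_sdiff_of_subset hsub, hcard, card_union_of_disjoint hdisj, hQ.2.1, hQ'.2.1]

section FiniteCheck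

-- Otherwise `decide` would settle `∀ Q ∈ s, _` by running through the whole type `Finset V4`.
attribute [local instance 2000] Finset.decidableDforallFinset

set_option synthInstance.maxSize 3000 in
instance : DecidablePred IsSyzTriple := fun _ => by unfold IsSyzTriple; infer_instance

set_option synthInstance.maxSize 3000 in
instance : DecidablePred IsAzyQuad := fun _ => by unfold IsAzyQuad; infer_instance

set_option maxRecDepth 4000 in
theorem card_zeroSumQuadruples_sdiff_of_isSyzTriple :
    ∀ T ∈ Echar.powersetCard 3, IsSyzTriple T → #(zeroSumQuadruples (Echar \ T)) = 2 := by
  decide +kernel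

set_option maxRecDepth 4000 in
theorem card_zeroSumQuadruples_sdiff_of_isAzyQuad :
    ∀ A ∈ Echar.powersetCard 4, IsAzyQuad A → #(zeroSumQuadruples (Echar \ A)) = 3 := by
  decide +kernel

end FiniteCheck

/-- a syzygous triple is disjoint from exactly two Göpel quadruples, an
azygous quadruple is disjoint from exactly three Göpel quadruples, and any two Göpel
quadruples meet. -/
theorem disjointness_with_Gopel :
    (∀ T : Finset V4, IsSyzTriple T →
      {Q : Finset V4 | IsGopel Q ∧ Disjoint T Q}.ncard = 2) ∧
    (∀ A : Finset V4, IsAzyQuad A →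
      {Q : Finset V4 | IsGopel Q ∧ Disjoint A Q}.ncard = 3) ∧
    (∀ Q Q' : Finset V4, IsGopel Q → IsGopel Q' → ∃ m, m ∈ Q ∧ m ∈ Q') := by
  refine ⟨fun T hT => ?_, fun A hA => ?_, fun Q Q' hQ hQ' => ?_⟩
  · rw [setOf_isGopel_disjoint, Set.ncard_coe_finset]
    exact card_zeroSumQuadruples_sdiff_of_isSyzTriple T (mem_powersetCard.2 ⟨hT.1, hT.2.1⟩) hT
  · rw [setOf_isGopel_disjoint, Set.ncard_coe_finset]
    exact card_zeroSumQuadruples_sdiff_of_isAzyQuad A (mem_powersetCard.2 ⟨hA.1, hA.2.1⟩) hA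
  · exact not_disjoint_iff.1 (hQ.not_disjoint hQ')
end

section
/- Let x = (x_m)_{m∈E} be a ℂ-point of A₂(2)ˢ whose coordinates are not all zero, and set M := max_{m'∈E} |x_{m'}| (usual complex absolute value). Then the set {m ∈ E : |x_m| < M/27} either has at most 4 elements or is contained in the complement in E of some Göpel quadruple. -/
open Matrix BigOperators

/-!
The five linear equations imply, for each of the fifteen azygous quadruples `R ⊆ E`, a relation
`∑_{m ∈ R} ±x_m = 0`. So if three coordinates of an azygous quadruple are smaller than `t`, the
fourth is smaller than `3t`. A finite check shows that any set of at least five even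
characteristics meeting every Göpel quadruple spreads to all of `E` in two such steps. Were the
theorem false, the small coordinates would form such a set, and every coordinate would be
smaller than `9 · M/27 < M`.
-/

open Finset

lemma norm_le_sum_norm_erase_of_sum_eq_zero {ι E : Type*} [SeminormedAddCommGroup E]
    [DecidableEq ι] {s : Finset ι} {z : ι → E} (h : ∑ i ∈ s, z i = 0) {m : ι} (hm : m ∈ s) :
    ‖z m‖ ≤ ∑ i ∈ s.erase m, ‖z i‖ := by
  rw [← add_sum_erase s z hm, add_eq_zero_iff_eq_neg] at h
  rw [h, norm_neg]
  exact norm_sum_le _ _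

def evenChar : Fin 10 → V4 :=
  ![v0000, v0001, v0010, v0011, v0100, v0110, v1000, v1001, v1100, v1111]

lemma evenChar_injective : Function.Injective evenChar := by decide

lemma Echar_eq_image_evenChar : Echar = univ.image evenChar := by decide

lemma ncard_setOf_mem_Echar (P : V4 → Prop) [DecidablePred P] :
    {m | m ∈ Echar ∧ P m}.ncard = #{i | P (evenChar i)} := by
  have : {m | m ∈ Echar ∧ P m} = ↑(({i | P (evenChar i)} : Finset (Fin 10)).image evenChar) := by
    ext m
    simp only [Echar_eq_image_evenChar, coe_image, coe_filter, mem_univ,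
      true_and, Set.mem_image, mem_image]
    constructor
    · rintro ⟨⟨i, rfl⟩, hi⟩
      exact ⟨i, hi, rfl⟩
    · rintro ⟨i, hi, rfl⟩
      exact ⟨⟨i, rfl⟩, hi⟩
  rw [this, Set.ncard_coe_finset, card_image_of_injective _ evenChar_injective]

/-- The fifteen four-term relations implied by the five linear equations of `A₂(2)ˢ`, in the
coordinates `evenChar`; their supports are exactly the azygous quadruples. -/
def azygousRel : Fin 15 → Fin 10 → ℤ := ![
  ![1, -1, 0, 0, -1, 0, 0, 0, 0, -1],
  ![1, -1, 0, 0, 0, -1, 0, 0, -1, 0],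
  ![1, 0, -1, 0, 0, 0, -1, 0, 0, -1],
  ![1, 0, -1, 0, 0, 0, 0, -1, -1, 0],
  ![1, 0, 0, -1, -1, 0, 0, -1, 0, 0],
  ![1, 0, 0, -1, 0, -1, -1, 0, 0, 0],
  ![0, 1, -1, 0, 1, 0, -1, 0, 0, 0],
  ![0, 1, -1, 0, 0, 1, 0, -1, 0, 0],
  ![0, 1, 0, -1, 0, 0, -1, 0, 1, 0],
  ![0, 1, 0, -1, 0, 0, 0, -1, 0, 1],
  ![0, 0, 1, -1, -1, 0, 0, 0, 1, 0],
  ![0, 0, 1, -1, 0, -1, 0, 0, 0, 1],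
  ![0, 0, 0, 0, 1, -1, -1, 1, 0, 0],
  ![0, 0, 0, 0, 1, -1, 0, 0, -1, 1],
  ![0, 0, 0, 0, 0, 0, 1, -1, -1, 1]]

def azygousQuad (r : Fin 15) : Finset (Fin 10) := {n | azygousRel r n ≠ 0}

lemma card_azygousQuad (r : Fin 15) : #(azygousQuad r) = 4 := by
  revert r; decide

lemma azygousRel_eq_one_or_neg_one {r : Fin 15} {n : Fin 10} (hn : n ∈ azygousQuad r) :
    azygousRel r n = 1 ∨ azygousRel r n = -1 := by
  revert r n; decide

def gopelQuad : Fin 15 → Finset (Fin 10) :=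
  ![{0, 1, 2, 3}, {0, 1, 6, 7}, {0, 2, 4, 5}, {0, 3, 8, 9}, {0, 4, 6, 8},
    {0, 5, 7, 9}, {1, 2, 8, 9}, {1, 3, 4, 5}, {1, 4, 7, 8}, {1, 5, 6, 9},
    {2, 3, 6, 7}, {2, 4, 7, 9}, {2, 5, 6, 8}, {3, 4, 6, 9}, {3, 5, 7, 8}]

lemma isGopel_image_gopelQuad (k : Fin 15) : IsGopel ((gopelQuad k).image evenChar) := by
  unfold IsGopel; fin_cases k <;> decide +kernel

def azygousSpread (s : Fin 10 → Bool) (m : Fin 10) : Bool :=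
  s m || decide (∃ r, m ∈ azygousQuad r ∧ ∀ n ∈ (azygousQuad r).erase m, s n)

lemma azygousSpread_azygousSpread (s : Fin 10 → Bool) (hcard : 5 ≤ #{i | s i})
    (hgopel : ∀ k, ∃ i ∈ gopelQuad k, s i) (m : Fin 10) :
    azygousSpread (azygousSpread s) m := by
  revert s m; decide +kernel

lemma IsA22Point.sum_azygousRel_mul_eq_zero {k : Type*} [Field k] [CharZero k] {x : V4 → k}
    (hx : IsA22Point x) (r : Fin 15) :
    ∑ n, (azygousRel r n : k) * x (evenChar n) = 0 := by
  obtain ⟨h₁, h₂, h₃, h₄, h₅, -⟩ := hx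
  have e₀ : x v0000 = x v0011 + x v0110 + x v1001 + x v1100 - x v1111 := by
    linear_combination (1/2 : k) * (h₁ + h₂ - h₃ - h₄ + h₅)
  have e₁ : x v0001 = x v0011 + x v1001 - x v1111 := by
    linear_combination (1/2 : k) * (h₁ - h₂ - h₃ - h₄ + h₅)
  have e₂ : x v0010 = x v0011 + x v0110 - x v1111 := by linear_combination -h₃
  have e₄ : x v0100 = x v0110 + x v1100 - x v1111 := by
    linear_combination (1/2 : k) * (h₁ + h₂ - h₃ + h₄ + h₅)
  have e₆ : x v1000 = x v1001 + x v1100 - x v1111 := by linear_combination h₁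
  fin_cases r <;>
    simp [Fin.sum_univ_succ, azygousRel, evenChar, e₀, e₁, e₂, e₄, e₆] <;> ring

section Bounds

variable {k : Type*} [NormedField k] [CharZero k] {x : V4 → k}

lemma IsA22Point.norm_lt_of_azygousQuad (hx : IsA22Point x) {t : ℝ} {r : Fin 15}
    {m : Fin 10} (hm : m ∈ azygousQuad r)
    (hsmall : ∀ n ∈ (azygousQuad r).erase m, ‖x (evenChar n)‖ < t) :
    ‖x (evenChar m)‖ < 3 * t := by
  have hunit : ∀ n ∈ azygousQuad r,
      ‖(azygousRel r n : k) * x (evenChar n)‖ = ‖x (evenChar n)‖ := by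
    intro n hn
    rcases azygousRel_eq_one_or_neg_one hn with h | h <;> simp [h]
  have hrel : ∑ n ∈ azygousQuad r, (azygousRel r n : k) * x (evenChar n) = 0 := by
    rw [← hx.sum_azygousRel_mul_eq_zero r]
    refine sum_subset (subset_univ _) fun n _ hn => ?_
    simp only [azygousQuad, mem_filter, mem_univ, true_and, not_not] at hn
    simp [hn]
  have hcard : #((azygousQuad r).erase m) = 3 := by rw [card_erase_of_mem hm, card_azygousQuad]
  calc ‖x (evenChar m)‖
      = ‖(azygousRel r m : k) * x (evenChar m)‖ := (hunit m hm).symm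
    _ ≤ ∑ n ∈ (azygousQuad r).erase m, ‖(azygousRel r n : k) * x (evenChar n)‖ :=
        norm_le_sum_norm_erase_of_sum_eq_zero hrel hm
    _ = ∑ n ∈ (azygousQuad r).erase m, ‖x (evenChar n)‖ :=
        sum_congr rfl fun n hn => hunit n (mem_of_mem_erase hn)
    _ < ∑ _n ∈ (azygousQuad r).erase m, t :=
        sum_lt_sum_of_nonempty (card_pos.mp (by omega)) hsmall
    _ = 3 * t := by simp [hcard]

lemma IsA22Point.norm_lt_of_azygousSpread (hx : IsA22Point x) {t : ℝ} (ht : 0 ≤ t)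
    {s : Fin 10 → Bool} (hs : ∀ i, s i → ‖x (evenChar i)‖ < t) :
    ∀ m, azygousSpread s m → ‖x (evenChar m)‖ < 3 * t := by
  intro m hm
  simp only [azygousSpread, Bool.or_eq_true, decide_eq_true_eq] at hm
  rcases hm with hm | ⟨r, hmr, hrest⟩
  · linarith [hs m hm]
  · exact hx.norm_lt_of_azygousQuad hmr fun n hn => hs n (hrest n hn)

end Bounds

theorem small_coordinates_arch_general (x : V4 → ℂ)
    (hx : IsA22Point x) :
    ({m | m ∈ Echar ∧ ‖x m‖ <
        Echar.sup' Echar_nonempty (fun m' => ‖x m'‖) / 27} : Set V4).ncard ≤ 4 ∨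
    ∃ Q : Finset V4, IsGopel Q ∧
      ({m | m ∈ Echar ∧ ‖x m‖ <
        Echar.sup' Echar_nonempty (fun m' => ‖x m'‖) / 27} : Set V4) ⊆
        ↑(Echar \ Q) := by
  set M := Echar.sup' Echar_nonempty (fun m' => ‖x m'‖)
  obtain ⟨m₀, hm₀, hM⟩ : ∃ m ∈ Echar, M = ‖x m‖ := exists_mem_eq_sup' _ _
  set s : Fin 10 → Bool := fun i => decide (‖x (evenChar i)‖ < M / 27)
  by_contra! ⟨hcard, hgopel⟩
  have hs : ∀ i, s i → ‖x (evenChar i)‖ < M / 27 := fun i => of_decide_eq_true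
  have hmeet : ∀ k, ∃ i ∈ gopelQuad k, s i := fun k => by
    obtain ⟨m, ⟨hmE, hmt⟩, hmQ⟩ := Set.not_subset.mp (hgopel _ (isGopel_image_gopelQuad k))
    simp only [coe_sdiff, Set.mem_sdiff, mem_coe, hmE, true_and, not_not, mem_image] at hmQ
    obtain ⟨i, hi, rfl⟩ := hmQ
    exact ⟨i, hi, decide_eq_true hmt⟩
  have h5 : 5 ≤ #{i | s i} := by
    rw [ncard_setOf_mem_Echar] at hcard
    simpa [s, Nat.succ_le_iff] using hcard
  have ht : 0 ≤ M / 27 := div_nonneg (hM ▸ norm_nonneg _) (by norm_num)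
  obtain ⟨i₀, -, rfl⟩ := mem_image.mp (Echar_eq_image_evenChar ▸ hm₀)
  have hlt := hx.norm_lt_of_azygousSpread (by linarith) (hx.norm_lt_of_azygousSpread ht hs)
    i₀ (azygousSpread_azygousSpread s h5 hmeet i₀)
  linarith

/-- archimedean small-coordinate estimate for complex points of `A₂(2)ˢ`. -/
theorem small_coordinates_arch (x : V4 → ℂ)
    (hx : IsA22Point x) (hnz : ∃ m ∈ Echar, x m ≠ 0) :
    ({m | m ∈ Echar ∧ ‖x m‖ <
        Echar.sup' Echar_nonempty (fun m' => ‖x m'‖) / 27} : Set V4).ncard ≤ 4 ∨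
    ∃ Q : Finset V4, IsGopel Q ∧
      ({m | m ∈ Echar ∧ ‖x m‖ <
        Echar.sup' Echar_nonempty (fun m' => ‖x m'‖) / 27} : Set V4) ⊆
        ↑(Echar \ Q) :=
  small_coordinates_arch_general x hx
end

section
/- For any two distinct elements i, j ∈ E, there are exactly two 2-element subsets {k₁,ℓ₁} and {k₂,ℓ₂} of E \ {i,j} such that {i,j,k,ℓ} is an azygous quadruple, and these two 2-element subsets are disjoint from each other. -/
/-!
Since `e` is symmetric in its arguments, a four-element subset of `E` is an azygous quadruple
exactly when its four 3-element subsets are azygous triples, so the pairs completing `{i, j}` are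
described by values of `e` alone. That there are two of them and that they are disjoint is then a
finite verification over the ten even characteristics, done by evaluation.
-/

open Matrix BigOperators

lemma eSyz_swap_left (x y z : V4) : eSyz x y z = eSyz y x z := by
  simp only [eSyz, add_comm x y]
  ring

lemma eSyz_swap_right (x y z : V4) : eSyz x y z = eSyz x z y := by
  simp only [eSyz, add_right_comm x y z]
  ring

lemma eSyz_self_right (x y : V4) : eSyz x y y = 0 := by
  simp only [eSyz, add_assoc, CharTwo.add_self_eq_zero, add_zero]

lemma isAzyQuad_iff {a b c d : V4} (hab : a ≠ b) (hac : a ≠ c) (had : a ≠ d) (hbc : b ≠ c)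
    (hbd : b ≠ d) (hcd : c ≠ d) :
    IsAzyQuad {a, b, c, d} ↔ {a, b, c, d} ⊆ Echar ∧
      eSyz a b c ≠ 0 ∧ eSyz a b d ≠ 0 ∧ eSyz a c d ≠ 0 ∧ eSyz b c d ≠ 0 := by
  constructor
  · rintro ⟨hE, -, h⟩
    exact ⟨hE, h a (by simp) b (by simp) c (by simp) hab hac hbc,
      h a (by simp) b (by simp) d (by simp) hab had hbd,
      h a (by simp) c (by simp) d (by simp) hac had hcd,
      h b (by simp) c (by simp) d (by simp) hbc hbd hcd⟩
  · rintro ⟨hE, habc, habd, hacd, hbcd⟩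
    refine ⟨hE, ?_, ?_⟩
    · rw [Finset.card_insert_of_notMem (by simp [hab, hac, had]),
        Finset.card_insert_of_notMem (by simp [hbc, hbd]), Finset.card_pair hcd]
    · intro x hx y hy z hz hxy hxz hyz
      simp only [Finset.mem_insert, Finset.mem_singleton] at hx hy hz
      rcases hx with rfl | rfl | rfl | rfl <;> rcases hy with rfl | rfl | rfl | rfl <;>
        rcases hz with rfl | rfl | rfl | rfl <;>
        first
        | exact absurd rfl hxy | exact absurd rfl hxz | exact absurd rfl hyz
        | assumption
        | rwa [eSyz_swap_left] | rwa [eSyz_swap_right]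
        | rwa [eSyz_swap_left, eSyz_swap_right] | rwa [eSyz_swap_right, eSyz_swap_left]
        | rwa [eSyz_swap_left, eSyz_swap_right, eSyz_swap_left]

/-- `i` and `j` need not be excluded: `eSyz i j i = eSyz i j j = 0`. -/
def completingPairs (i j : V4) : Finset (Finset V4) :=
  (Echar.powersetCard 2).filter fun P =>
    ∀ k ∈ P, ∀ l ∈ P, k ≠ l → eSyz i j k ≠ 0 ∧ eSyz i k l ≠ 0 ∧ eSyz j k l ≠ 0

lemma ne_of_eSyz_ne_zero {i j k : V4} (h : eSyz i j k ≠ 0) : k ≠ i ∧ k ≠ j := by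
  constructor <;> rintro rfl
  · exact h (by rw [eSyz_swap_left, eSyz_self_right])
  · exact h (eSyz_self_right i k)

lemma pair_mem_completingPairs {i j k l : V4} (hi : i ∈ Echar) (hj : j ∈ Echar) (hij : i ≠ j)
    (hkl : k ≠ l) :
    {k, l} ∈ completingPairs i j ↔ {k, l} ⊆ Echar \ {i, j} ∧ IsAzyQuad ({k, l} ∪ {i, j}) := by
  have hunion : ({k, l} ∪ {i, j} : Finset V4) = {i, j, k, l} := by
    ext
    simp only [Finset.mem_union, Finset.mem_insert, Finset.mem_singleton]
    tauto
  rw [hunion]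
  simp only [completingPairs, Finset.mem_filter, Finset.mem_powersetCard, Finset.card_pair hkl,
    Finset.mem_insert, Finset.mem_singleton, forall_eq_or_imp, forall_eq, ne_eq,
    not_true_eq_false, false_imp_iff, true_and, and_true, hkl, Ne.symm hkl, not_false_eq_true,
    true_imp_iff, Finset.subset_sdiff, Finset.disjoint_insert_left,
    Finset.disjoint_singleton_left, not_or, eSyz_swap_right _ l k]
  constructor
  · rintro ⟨hE, ⟨hijk, hikl, hjkl⟩, hijl, -, -⟩
    obtain ⟨hki, hkj⟩ := ne_of_eSyz_ne_zero hijk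
    obtain ⟨hli, hlj⟩ := ne_of_eSyz_ne_zero hijl
    refine ⟨⟨hE, ⟨hki, hkj⟩, hli, hlj⟩, ?_⟩
    exact (isAzyQuad_iff hij (Ne.symm hki) (Ne.symm hli) (Ne.symm hkj) (Ne.symm hlj) hkl).mpr
      ⟨Finset.insert_subset hi (Finset.insert_subset hj hE), hijk, hijl, hikl, hjkl⟩
  · rintro ⟨⟨hE, ⟨hki, hkj⟩, hli, hlj⟩, hazy⟩
    obtain ⟨-, hijk, hijl, hikl, hjkl⟩ :=
      (isAzyQuad_iff hij (Ne.symm hki) (Ne.symm hli) (Ne.symm hkj) (Ne.symm hlj) hkl).mp hazy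
    exact ⟨hE, ⟨hijk, hikl, hjkl⟩, hijl, hikl, hjkl⟩

lemma mem_completingPairs {i j : V4} (hi : i ∈ Echar) (hj : j ∈ Echar) (hij : i ≠ j)
    (P : Finset V4) :
    P ∈ completingPairs i j ↔ P.card = 2 ∧ P ⊆ Echar \ {i, j} ∧ IsAzyQuad (P ∪ {i, j}) := by
  constructor
  · intro hP
    have hcard := (Finset.mem_powersetCard.mp (Finset.mem_filter.mp hP).1).2
    obtain ⟨k, l, hkl, rfl⟩ := Finset.card_eq_two.mp hcard
    exact ⟨hcard, (pair_mem_completingPairs hi hj hij hkl).mp hP⟩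
  · rintro ⟨hcard, hP⟩
    obtain ⟨k, l, hkl, rfl⟩ := Finset.card_eq_two.mp hcard
    exact (pair_mem_completingPairs hi hj hij hkl).mpr hP

theorem card_completingPairs {i j : V4} (hi : i ∈ Echar) (hj : j ∈ Echar) (hij : i ≠ j) :
    (completingPairs i j).card = 2 := by
  revert i j
  decide +kernel

theorem card_filter_mem_completingPairs_le_one {i j : V4} (hi : i ∈ Echar) (hj : j ∈ Echar)
    (hij : i ≠ j) (k : V4) : ((completingPairs i j).filter (k ∈ ·)).card ≤ 1 := by
  revert i j k
  decide +kernel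

lemma completingPairs_disjoint {i j : V4} (hi : i ∈ Echar) (hj : j ∈ Echar) (hij : i ≠ j)
    {P Q : Finset V4} (hP : P ∈ completingPairs i j) (hQ : Q ∈ completingPairs i j) (hPQ : P ≠ Q) :
    Disjoint P Q :=
  Finset.disjoint_left.mpr fun k hkP hkQ =>
    hPQ (Finset.card_le_one.mp (card_filter_mem_completingPairs_le_one hi hj hij k) P
      (Finset.mem_filter.mpr ⟨hP, hkP⟩) Q (Finset.mem_filter.mpr ⟨hQ, hkQ⟩))

/-- any pair of distinct elements of `E` is completed into an azygous
quadruple by exactly two 2-element subsets of `E \ {i,j}`, which are disjoint. -/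
theorem two_disjoint_completing_pairs (i j : V4)
    (hi : i ∈ Echar) (hj : j ∈ Echar) (hij : i ≠ j) :
    ∃ P₁ P₂ : Finset V4, P₁ ≠ P₂ ∧ Disjoint P₁ P₂ ∧
      ∀ P : Finset V4,
        (P.card = 2 ∧ P ⊆ Echar \ {i, j} ∧ IsAzyQuad (P ∪ {i, j})) ↔
          (P = P₁ ∨ P = P₂) := by
  obtain ⟨P₁, P₂, hne, hpairs⟩ := Finset.card_eq_two.mp (card_completingPairs hi hj hij)
  have hP₁ : P₁ ∈ completingPairs i j := by simp [hpairs]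
  have hP₂ : P₂ ∈ completingPairs i j := by simp [hpairs]
  refine ⟨P₁, P₂, hne, completingPairs_disjoint hi hj hij hP₁ hP₂ hne, fun P => ?_⟩
  rw [← mem_completingPairs hi hj hij, hpairs, Finset.mem_insert, Finset.mem_singleton]
end
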